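/- Fix a positive integer N and integers 1 ≤ m_1 < m_2 < ⋯ < m_r = N with r ≥ 1. Define formal power series F_0 = 1 and, for 1 ≤ l ≤ r, F_l as the unique formal power series with D_{m_l} F_l = F_{l-1} and F_l(0) = 0, where D_m = y(1+y)d²/dy² + [1-(N-1)y]d/dy + m(N-m). Then F_r is a polynomial of degree exactly N, and its y^N coefficient equals 1/(N² ∏_{l=1}^{r-1} m_l(N-m_l)). -/

import Mathlib

open PowerSeries

/-- The differential operator `D_m = y(1+y) d²/dy² + [1-(N-1)y] d/dy + m(N-m)`
acting on formal power series over `ℚ`. -/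
noncomputable def Dop (N m : ℕ) (u : PowerSeries ℚ) : PowerSeries ℚ :=
  (PowerSeries.X * (1 + PowerSeries.X)) *
      (PowerSeries.derivative ℚ (PowerSeries.derivative ℚ u))
    + (1 - PowerSeries.C ((N : ℚ) - 1) * PowerSeries.X) * (PowerSeries.derivative ℚ u)
    + PowerSeries.C ((m : ℚ) * ((N : ℚ) - (m : ℚ))) * u

open Finset

/-!
Coefficientwise, `D_m u = f` reads `(j+1)² u_{j+1} = f_j - (m-j)(N-m-j) u_j`. The factor `m - j`
vanishes at `j = m`, so inductively `F_l` has degree at most `m_l`; in particular `F_r` has degree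
at most `N` and the `F_l` with `l < r` have no `y^N` term.

For the top coefficient write `N = n + 1` and let `Λ(u) = ∑_{j ≤ n} u_j / C(n, j)`. Since
`(j+1) / C(n,j) = (n-j) / C(n,j+1)`, the weights turn the shifted term `(j+1)² u_{j+1}` into
`j(N-j) u_j`, and `j(N-j) + (m-j)(N-m-j) = m(N-m)` gives `Λ(D_m u) = m(N-m) Λ(u) + N² u_N`.
Applying `Λ` along the chain, `1 = Λ(F_0) = N² [y^N] F_r ∏_{l<r} m_l(N-m_l)`.
-/

lemma coeff_Dop (N m : ℕ) (u : ℚ⟦X⟧) (j : ℕ) :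
    coeff j (Dop N m u) =
      ((j : ℚ) + 1) ^ 2 * coeff (j + 1) u + ((m : ℚ) - j) * ((N : ℚ) - m - j) * coeff j u := by
  set w := derivative ℚ u
  have hD : Dop N m u = X * derivative ℚ w + X * (X * derivative ℚ w) + w
      - ((N : ℚ) - 1) • (X * w) + ((m : ℚ) * (N - m)) • u := by
    simp only [Dop, smul_eq_C_mul]; ring
  rw [hD]
  rcases j with _ | _ | j <;>
    simp only [map_add, map_sub, coeff_smul, coeff_zero_X_mul, coeff_succ_X_mul, w,
      coeff_derivative, smul_eq_mul] <;> push_cast <;> ring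

lemma coeff_eq_zero_of_Dop_eq {N m : ℕ} {u f : ℚ⟦X⟧} (h : Dop N m u = f)
    (hf : ∀ j, m ≤ j → coeff j f = 0) {j : ℕ} (hj : m < j) : coeff j u = 0 := by
  have step : ∀ i, m ≤ i → ((m : ℚ) - i) * coeff i u = 0 → coeff (i + 1) u = 0 := by
    intro i hi h0
    have hrec := congrArg (coeff i) h
    rw [coeff_Dop, hf i hi] at hrec
    have : ((i : ℚ) + 1) ^ 2 * coeff (i + 1) u = 0 := by
      linear_combination hrec - ((N : ℚ) - m - i) * h0
    exact (mul_eq_zero.mp this).resolve_left (by positivity)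
  induction j, hj using Nat.le_induction with
  | base => exact step m le_rfl (by simp)
  | succ i hi ih => exact step i (by omega) (by rw [ih, mul_zero])

lemma coeff_eq_zero_of_Dop_chain {N r : ℕ} {m : ℕ → ℕ} {F : ℕ → ℚ⟦X⟧} (hm1 : 1 ≤ m 1)
    (hmono : ∀ l, 1 ≤ l → l < r → m l < m (l + 1)) (hF0 : F 0 = 1)
    (hF : ∀ l, 1 ≤ l → l ≤ r → Dop N (m l) (F l) = F (l - 1))
    {l : ℕ} (hl : 1 ≤ l) (hlr : l ≤ r) {j : ℕ} (hj : m l < j) : coeff j (F l) = 0 := by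
  induction l, hl using Nat.le_induction generalizing j with
  | base =>
    refine coeff_eq_zero_of_Dop_eq (hF 1 le_rfl hlr) (fun i hi => ?_) hj
    rw [hF0, coeff_one, if_neg (by omega)]
  | succ l hl ih =>
    have hml := hmono l hl hlr
    exact coeff_eq_zero_of_Dop_eq (by simpa using hF (l + 1) (by omega) hlr)
      (fun i hi => ih (by omega) (by omega)) hj

noncomputable def invChooseSum (n : ℕ) (u : ℚ⟦X⟧) : ℚ :=
  ∑ j ∈ range (n + 1), coeff j u / n.choose j

lemma invChooseSum_one (n : ℕ) : invChooseSum n 1 = 1 := by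
  rw [invChooseSum, sum_eq_single_of_mem 0 (mem_range.mpr n.succ_pos)]
  · simp
  · intro j _ hj
    simp [coeff_one, hj]

lemma succ_div_choose_eq {n j : ℕ} (hj : j < n) :
    ((j : ℚ) + 1) / n.choose j = (n - j) / n.choose (j + 1) := by
  have h := congrArg (Nat.cast : ℕ → ℚ) (Nat.choose_succ_right_eq n j)
  push_cast [Nat.cast_sub hj.le] at h
  rw [div_eq_div_iff (by positivity [Nat.choose_pos hj.le])
    (by positivity [Nat.choose_pos (Nat.succ_le_of_lt hj)])]
  linear_combination h

lemma sum_sq_mul_coeff_succ_div_choose (n : ℕ) (u : ℚ⟦X⟧) :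
    ∑ j ∈ range (n + 1), ((j : ℚ) + 1) ^ 2 * coeff (j + 1) u / n.choose j
      = ∑ j ∈ range (n + 1), (j : ℚ) * (n + 1 - j) * coeff j u / n.choose j
        + ((n : ℚ) + 1) ^ 2 * coeff (n + 1) u := by
  rw [sum_range_succ, sum_range_succ', Nat.choose_self, Nat.cast_one, div_one]
  congr 1
  simp only [Nat.cast_zero, zero_mul, zero_div, add_zero]
  refine sum_congr rfl fun j hj => ?_
  have h := succ_div_choose_eq (mem_range.mp hj)
  push_cast
  calc ((j : ℚ) + 1) ^ 2 * coeff (j + 1) u / n.choose j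
      = ((j : ℚ) + 1) / n.choose j * ((j + 1) * coeff (j + 1) u) := by ring
    _ = _ := by rw [h]; ring

lemma invChooseSum_Dop (n m : ℕ) (u : ℚ⟦X⟧) :
    invChooseSum n (Dop (n + 1) m u)
      = m * ((n : ℚ) + 1 - m) * invChooseSum n u + ((n : ℚ) + 1) ^ 2 * coeff (n + 1) u := by
  simp only [invChooseSum, coeff_Dop, add_div, sum_add_distrib,
    sum_sq_mul_coeff_succ_div_choose, mul_sum]
  rw [add_right_comm, ← sum_add_distrib]
  congr 1
  refine sum_congr rfl fun j _ => ?_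
  push_cast
  ring

lemma invChooseSum_mul_prod {n L : ℕ} {m : ℕ → ℕ} {F : ℕ → ℚ⟦X⟧}
    (hF : ∀ l, 1 ≤ l → l ≤ L → Dop (n + 1) (m l) (F l) = F (l - 1))
    (htop : ∀ l, 1 ≤ l → l ≤ L → coeff (n + 1) (F l) = 0) :
    invChooseSum n (F L) * ∏ k ∈ Icc 1 L, ((m k : ℚ) * ((n : ℚ) + 1 - m k))
      = invChooseSum n (F 0) := by
  induction L with
  | zero => simp
  | succ L ih =>
    have hL : Dop (n + 1) (m (L + 1)) (F (L + 1)) = F L := by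
      simpa using hF (L + 1) (by omega) le_rfl
    rw [prod_Icc_succ_top (by omega), ← ih (fun l h1 h2 => hF l h1 (by omega))
      (fun l h1 h2 => htop l h1 (by omega)), ← hL, invChooseSum_Dop, htop (L + 1) (by omega) le_rfl]
    ring

/-- Proposition `recusolve`: with `1 ≤ m_1 < ⋯ < m_r = N`, `F_0 = 1`, and `F_l` the unique
formal power series with `D_{m_l} F_l = F_{l-1}` and `F_l(0) = 0` for `1 ≤ l ≤ r`, the series
`F_r` is a polynomial of degree exactly `N`, with `y^N` coefficient
`1/(N² ∏_{l=1}^{r-1} m_l (N - m_l))`. -/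
theorem Fr_top_coeff (N r : ℕ) (hN : 0 < N) (hr : 1 ≤ r) (m : ℕ → ℕ)
    (hm1 : 1 ≤ m 1) (hmono : ∀ k l, 1 ≤ k → k < l → l ≤ r → m k < m l) (hmr : m r = N)
    (F : ℕ → PowerSeries ℚ) (hF0 : F 0 = 1)
    (hF : ∀ l, 1 ≤ l → l ≤ r →
      Dop N (m l) (F l) = F (l - 1) ∧ PowerSeries.constantCoeff (F l) = 0) :
    (∀ j : ℕ, N < j → PowerSeries.coeff j (F r) = 0) ∧
      PowerSeries.coeff N (F r)
        = 1 / ((N : ℚ)^2 * ∏ l ∈ Finset.Icc 1 (r - 1), ((m l : ℚ) * ((N : ℚ) - (m l : ℚ)))) := by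
  obtain ⟨n, rfl⟩ : ∃ n, N = n + 1 := ⟨N - 1, by omega⟩
  have hDop l (h1 : 1 ≤ l) (h2 : l ≤ r) : Dop (n + 1) (m l) (F l) = F (l - 1) := (hF l h1 h2).1
  have hdeg l (h1 : 1 ≤ l) (h2 : l ≤ r) j (hj : m l < j) : coeff j (F l) = 0 :=
    coeff_eq_zero_of_Dop_chain hm1 (fun k hk hkr => hmono k (k + 1) hk k.lt_succ_self hkr)
      hF0 hDop h1 h2 hj
  refine ⟨fun j hj => hdeg r hr le_rfl j (hmr ▸ hj), ?_⟩
  have htel := invChooseSum_mul_prod (L := r - 1) (fun l h1 h2 => hDop l h1 (by omega))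
    fun l h1 h2 => hdeg l h1 (by omega) (n + 1) (hmr ▸ hmono l r h1 (by omega) le_rfl)
  rw [hF0, invChooseSum_one, ← hDop r hr le_rfl, invChooseSum_Dop, hmr] at htel
  push_cast at htel ⊢
  apply eq_one_div_of_mul_eq_one_right
  linear_combination htel
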